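/- Let v, w ∈ S_n be fully commutative permutations with w = v·s_i, ℓ(w) = ℓ(v)+1, and i ∈ supp(v). Set M := max{v(j) : j ≤ i} and m := min{v(j) : j ≥ i+1}. Then the subsequence M, v(i), v(i+1), m of the one-line notation of v forms a 3142-pattern; in particular v(i) < m < M < v(i+1), M occurs strictly before position i, and m occurs strictly after position i+1. -/

import Mathlib

/-- The value in position `j` (0-indexed) of the one-line notation of `w`,
extended by the identity outside the range `[0, n)`. -/
def entry {n : ℕ} (w : Equiv.Perm (Fin n)) (j : ℕ) : ℕ :=
  if h : j < n then (w ⟨j, h⟩ : ℕ) else j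

/-- One-line notation of a permutation, as a list of natural numbers (0-indexed values). -/
def oneLine {n : ℕ} (w : Equiv.Perm (Fin n)) : List ℕ :=
  List.ofFn (fun i => (w i : ℕ))

/-- A permutation is fully commutative iff it avoids the pattern 321. -/
def FullyCommutative {n : ℕ} (w : Equiv.Perm (Fin n)) : Prop :=
  ¬ ∃ i j k : Fin n, i < j ∧ j < k ∧ w k < w j ∧ w j < w i

/-- A permutation is boolean iff it avoids the patterns 321 and 3412. -/
def BooleanPerm {n : ℕ} (w : Equiv.Perm (Fin n)) : Prop :=
  FullyCommutative w ∧
    ¬ ∃ i j k l : Fin n, i < j ∧ j < k ∧ k < l ∧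
        w k < w l ∧ w l < w i ∧ w i < w j

/-- The Coxeter length of a permutation: its number of inversions. -/
def invCount {n : ℕ} (w : Equiv.Perm (Fin n)) : ℕ :=
  (Finset.univ.filter fun p : Fin n × Fin n => p.1 < p.2 ∧ w p.2 < w p.1).card

/-- The support of `w`: the set of (0-indexed) indices `i` such that the simple
transposition `s_i` appears in some (equivalently, every) reduced word of `w`;
equivalently, `{w(0),…,w(i)} ≠ {0,…,i}`, i.e. `max {w(j) : j ≤ i} > i`. -/
def Supp {n : ℕ} (w : Equiv.Perm (Fin n)) : Set ℕ :=
  {i | ∃ j : Fin n, (j : ℕ) ≤ i ∧ i < (w j : ℕ)}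

/-- The simple transposition `s_i`, swapping positions `i` and `i+1` (0-indexed). -/
def simpleTr {n : ℕ} (i : ℕ) (h : i + 1 < n) : Equiv.Perm (Fin n) :=
  Equiv.swap ⟨i, by omega⟩ ⟨i + 1, h⟩

/-- Schensted row insertion of a value into a tableau (a list of rows). -/
def rowInsert : List (List ℕ) → ℕ → List (List ℕ)
  | [], x => [[x]]
  | r :: rest, x =>
    match r.find? (fun y => decide (x < y)) with
    | none => (r ++ [x]) :: rest
    | some y => (r.map fun z => if z = y then x else z) :: rowInsert rest y

/-- RSK insertion tableau of a list. -/
def RSKList (l : List ℕ) : List (List ℕ) := l.foldl rowInsert []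

/-- RSK insertion tableau `P(w)` of a permutation. -/
def RSKP {n : ℕ} (w : Equiv.Perm (Fin n)) : List (List ℕ) := RSKList (oneLine w)

/-- RSK recording tableau `Q(w) = P(w⁻¹)`. -/
def RSKQ {n : ℕ} (w : Equiv.Perm (Fin n)) : List (List ℕ) := RSKP w⁻¹

/-- The set of entries in the first row of a tableau. -/
def Row1 (T : List (List ℕ)) : Finset ℕ := (T.getD 0 []).toFinset

/-- The set of entries in the second row of a tableau. -/
def Row2 (T : List (List ℕ)) : Finset ℕ := (T.getD 1 []).toFinset

/-- `BumpsAt l k z` : during the RSK insertion of the list `l`, the insertion of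
the `(k+1)`-st letter of `l` bumps the value `z` from the first row to the
second row (`z` is the smallest first-row entry larger than the inserted letter). -/
def BumpsAt (l : List ℕ) (k : ℕ) (z : ℕ) : Prop :=
  k < l.length ∧
    ((RSKList (l.take k)).getD 0 []).find? (fun y => decide (l.getD k 0 < y)) = some z

/-- `Bumps l b z` : during the RSK insertion of `l`, the value `b` bumps the
value `z` from the first row to the second row. -/
def Bumps (l : List ℕ) (b z : ℕ) : Prop :=
  ∃ k, l.getD k 0 = b ∧ BumpsAt l k z

/-- A finite set of naturals is crowded if some integer interval `[y, y+2x]`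
(with `x > 0`) contains more than `x+1` of its elements. -/
def CrowdedSet (L : Finset ℕ) : Prop :=
  ∃ x y : ℤ, 0 < x ∧
    x + 1 < ((L.filter fun a : ℕ => y ≤ (a : ℤ) ∧ (a : ℤ) ≤ y + 2 * x).card : ℤ)

/-- A fully commutative permutation is crowded if the second row of its RSK
insertion tableau is a crowded set. -/
def CrowdedPerm {n : ℕ} (w : Equiv.Perm (Fin n)) : Prop :=
  CrowdedSet (Row2 (RSKP w))

/-- Covering relation of the right weak order. -/
def RWCovers {n : ℕ} (u v : Equiv.Perm (Fin n)) : Prop :=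
  ∃ i, ∃ h : i + 1 < n, v = u * simpleTr i h ∧ invCount v = invCount u + 1

/-- The right weak order on `S_n`. -/
def RightWeakLE {n : ℕ} : Equiv.Perm (Fin n) → Equiv.Perm (Fin n) → Prop :=
  Relation.ReflTransGen RWCovers

/-- Covering relation of the left weak order. -/
def LWCovers {n : ℕ} (u v : Equiv.Perm (Fin n)) : Prop :=
  ∃ i, ∃ h : i + 1 < n, v = simpleTr i h * u ∧ invCount v = invCount u + 1

/-- The left weak order on `S_n`. -/
def LeftWeakLE {n : ℕ} : Equiv.Perm (Fin n) → Equiv.Perm (Fin n) → Prop :=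
  Relation.ReflTransGen LWCovers

/-- A minimal crowded permutation: a crowded fully commutative permutation all of
whose strict predecessors (among fully commutative permutations) in the right
weak order are uncrowded. -/
def MinimalCrowded {n : ℕ} (w : Equiv.Perm (Fin n)) : Prop :=
  FullyCommutative w ∧ CrowdedPerm w ∧
    ∀ v : Equiv.Perm (Fin n), FullyCommutative v → RightWeakLE v w → v ≠ w →
      ¬ CrowdedPerm v

/-- `l` is an increasing subsequence of the one-line notation of `w`. -/
def IncreasingSubseq {n : ℕ} (w : Equiv.Perm (Fin n)) (l : List ℕ) : Prop :=
  l.Sublist (oneLine w) ∧ l.Pairwise (· < ·)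

/-- The length of a longest increasing subsequence of `w`. -/
noncomputable def lisLen {n : ℕ} (w : Equiv.Perm (Fin n)) : ℕ :=
  sSup {k | ∃ l : List ℕ, IncreasingSubseq w l ∧ l.length = k}

/-- A consecutive occurrence of the pattern 415263 starting at (0-indexed) position `i`. -/
def Consec415263 {n : ℕ} (w : Equiv.Perm (Fin n)) (i : ℕ) : Prop :=
  i + 5 < n ∧
    entry w (i + 1) < entry w (i + 3) ∧ entry w (i + 3) < entry w (i + 5) ∧
    entry w (i + 5) < entry w i ∧ entry w i < entry w (i + 2) ∧
    entry w (i + 2) < entry w (i + 4)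

/-- A consecutive occurrence of the pattern 315264 starting at (0-indexed) position `i`. -/
def Consec315264 {n : ℕ} (w : Equiv.Perm (Fin n)) (i : ℕ) : Prop :=
  i + 5 < n ∧
    entry w (i + 1) < entry w (i + 3) ∧ entry w (i + 3) < entry w i ∧
    entry w i < entry w (i + 5) ∧ entry w (i + 5) < entry w (i + 2) ∧
    entry w (i + 2) < entry w (i + 4)

/-- An occurrence (not necessarily consecutive) of the pattern 415263 in `w`,
at positions `p 0 < p 1 < ⋯ < p 5`. -/
def Occ415263 {n : ℕ} (w : Equiv.Perm (Fin n)) (p : Fin 6 → Fin n) : Prop :=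
  StrictMono p ∧
    w (p 1) < w (p 3) ∧ w (p 3) < w (p 5) ∧ w (p 5) < w (p 0) ∧
    w (p 0) < w (p 2) ∧ w (p 2) < w (p 4)


/-!
Since `ℓ(v s_i) = ℓ(v) + 1`, `v` has an ascent `v(i) < v(i+1)` at `i`, so `w` has the descent
`w(i) = v(i+1) > v(i) = w(i+1)`. As `w` avoids 321, every entry of `v` after position `i + 1`
exceeds `v(i)` and every entry before position `i` is below `v(i+1)`; this gives
`v(i) < m` and `M < v(i+1)`. Since `i ∈ supp(v)`, some value `> i` sits in the first `i + 1`
positions, so by pigeonhole some value `≤ i` sits after them: `m ≤ i < M`. The strict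
positions of `M` and `m` then follow by comparing values.
-/

section SimpleTransposition

variable {n : ℕ} {i : ℕ} (h : i + 1 < n)

@[simp]
lemma simpleTr_apply_left : simpleTr i h ⟨i, by omega⟩ = ⟨i + 1, h⟩ :=
  Equiv.swap_apply_left _ _

@[simp]
lemma simpleTr_apply_right : simpleTr i h ⟨i + 1, h⟩ = ⟨i, by omega⟩ :=
  Equiv.swap_apply_right _ _

lemma simpleTr_apply_of_ne {x : Fin n} (hx : (x : ℕ) ≠ i) (hx' : (x : ℕ) ≠ i + 1) :
    simpleTr i h x = x :=
  Equiv.swap_apply_of_ne_of_ne (fun e => hx (congrArg Fin.val e))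
    (fun e => hx' (congrArg Fin.val e))

@[simp]
lemma simpleTr_mul_self : simpleTr i h * simpleTr i h = 1 :=
  Equiv.swap_mul_self _ _

lemma simpleTr_lt_simpleTr_iff {x y : Fin n}
    (hxy : ¬(x = ⟨i, by omega⟩ ∧ y = ⟨i + 1, h⟩)) (hyx : ¬(x = ⟨i + 1, h⟩ ∧ y = ⟨i, by omega⟩)) :
    simpleTr i h x < simpleTr i h y ↔ x < y := by
  simp only [simpleTr, Equiv.swap_apply_def]
  split_ifs <;> simp only [Fin.lt_def, Fin.ext_iff] at * <;> omega

end SimpleTransposition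

section Inversions

variable {n : ℕ}

def inversions (w : Equiv.Perm (Fin n)) : Finset (Fin n × Fin n) :=
  Finset.univ.filter fun p => p.1 < p.2 ∧ w p.2 < w p.1

lemma mem_inversions {w : Equiv.Perm (Fin n)} {p : Fin n × Fin n} :
    p ∈ inversions w ↔ p.1 < p.2 ∧ w p.2 < w p.1 := by
  simp [inversions]

lemma invCount_eq_card_inversions (w : Equiv.Perm (Fin n)) :
    invCount w = (inversions w).card :=
  rfl

lemma inversions_mul_simpleTr {u : Equiv.Perm (Fin n)} {i : ℕ} (h : i + 1 < n)
    (hu : u ⟨i, by omega⟩ < u ⟨i + 1, h⟩) :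
    inversions (u * simpleTr i h) = insert (⟨i, by omega⟩, ⟨i + 1, h⟩)
      ((inversions u).map (Equiv.prodCongr (simpleTr i h) (simpleTr i h)).toEmbedding) := by
  ext ⟨x, y⟩
  simp only [Finset.mem_insert, Finset.mem_map_equiv, Equiv.prodCongr_symm, simpleTr,
    Equiv.symm_swap, Equiv.prodCongr_apply, Prod.map, mem_inversions, Equiv.Perm.coe_mul,
    Function.comp_apply, Prod.mk.injEq]
  by_cases hxy : x = ⟨i, by omega⟩ ∧ y = ⟨i + 1, h⟩
  · obtain ⟨rfl, rfl⟩ := hxy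
    simp [Fin.lt_def, hu]
  by_cases hyx : x = ⟨i + 1, h⟩ ∧ y = ⟨i, by omega⟩
  · obtain ⟨rfl, rfl⟩ := hyx
    simp [Fin.lt_def, hu.not_gt]
  rw [← simpleTr, simpleTr_lt_simpleTr_iff h hxy hyx]
  simp only [hxy, false_or, simpleTr]

lemma invCount_mul_simpleTr_of_lt {u : Equiv.Perm (Fin n)} {i : ℕ} (h : i + 1 < n)
    (hu : u ⟨i, by omega⟩ < u ⟨i + 1, h⟩) :
    invCount (u * simpleTr i h) = invCount u + 1 := by
  rw [invCount_eq_card_inversions, inversions_mul_simpleTr h hu, Finset.card_insert_of_notMem,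
    Finset.card_map, invCount_eq_card_inversions]
  rw [Finset.mem_map_equiv, mem_inversions]
  simp only [Equiv.prodCongr_symm, Equiv.prodCongr_apply, Prod.map, simpleTr, Equiv.symm_swap,
    Equiv.swap_apply_left, Equiv.swap_apply_right]
  exact fun hinv => absurd hinv.1 (by rw [Fin.lt_def]; simp)

lemma apply_lt_apply_of_invCount_mul_simpleTr {v : Equiv.Perm (Fin n)} {i : ℕ} (h : i + 1 < n)
    (hl : invCount (v * simpleTr i h) = invCount v + 1) :
    v ⟨i, by omega⟩ < v ⟨i + 1, h⟩ := by
  refine lt_of_le_of_ne (not_lt.1 fun hdesc => ?_) fun e => by simpa using v.injective e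
  have hback := invCount_mul_simpleTr_of_lt (u := v * simpleTr i h) h (by simpa using hdesc)
  rw [mul_assoc, simpleTr_mul_self, mul_one] at hback
  omega

end Inversions

lemma exists_succ_le_apply_le_of_lt_apply {n : ℕ} (v : Equiv.Perm (Fin n)) {i : ℕ} {j : Fin n}
    (hj : (j : ℕ) ≤ i) (hvj : i < (v j : ℕ)) :
    ∃ q : Fin n, i + 1 ≤ (q : ℕ) ∧ (v q : ℕ) ≤ i := by
  by_contra! hlate
  set S : Finset (Fin n) := Finset.univ.filter fun x => (x : ℕ) ≤ i
  have hsub : S.map v.symm.toEmbedding ⊆ S := by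
    intro x hx
    obtain ⟨y, hy, rfl⟩ := Finset.mem_map.1 hx
    simp only [S, Finset.mem_filter, Finset.mem_univ, true_and] at hy ⊢
    by_contra! hlt
    have := hlate _ hlt
    simp only [Equiv.toEmbedding_apply, Equiv.apply_symm_apply] at this
    omega
  have hj' : j ∈ S.map v.symm.toEmbedding :=
    (Finset.eq_of_subset_of_card_le hsub (by simp)).symm ▸ by simpa [S] using hj
  obtain ⟨y, hy, hyj⟩ := Finset.mem_map.1 hj'
  simp only [S, Finset.mem_filter, Finset.mem_univ, true_and, Equiv.toEmbedding_apply] at hy hyj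
  rw [← hyj, Equiv.apply_symm_apply] at hvj
  omega

namespace FullyCommutative

variable {n : ℕ} {v : Equiv.Perm (Fin n)} {i : ℕ} {h : i + 1 < n}

lemma lt_apply_of_mul_simpleTr (hw : FullyCommutative (v * simpleTr i h))
    (hasc : v ⟨i, by omega⟩ < v ⟨i + 1, h⟩) {q : Fin n} (hq : i + 1 ≤ (q : ℕ)) :
    v ⟨i, by omega⟩ < v q := by
  rcases hq.lt_or_eq with hq | hq
  · by_contra! hle
    refine hw ⟨⟨i, by omega⟩, ⟨i + 1, h⟩, q, by simp [Fin.lt_def], by simpa [Fin.lt_def], ?_, ?_⟩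
    · simpa [simpleTr_apply_of_ne h (x := q) (by omega) (by omega)] using
        lt_of_le_of_ne hle fun e => by rw [v.injective e] at hq; simp at hq
    · simpa using hasc
  · rwa [show q = ⟨i + 1, h⟩ from Fin.ext hq.symm]

lemma apply_lt_of_mul_simpleTr (hw : FullyCommutative (v * simpleTr i h))
    (hasc : v ⟨i, by omega⟩ < v ⟨i + 1, h⟩) {p : Fin n} (hp : (p : ℕ) ≤ i) :
    v p < v ⟨i + 1, h⟩ := by
  rcases hp.lt_or_eq with hp | hp
  · by_contra! hle
    refine hw ⟨p, ⟨i, by omega⟩, ⟨i + 1, h⟩, by simpa [Fin.lt_def], by simp [Fin.lt_def], ?_, ?_⟩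
    · simpa using hasc
    · simpa [simpleTr_apply_of_ne h (x := p) (by omega) (by omega)] using
        lt_of_le_of_ne hle fun e => by rw [← v.injective e] at hp; simp at hp
  · rwa [show p = ⟨i, by omega⟩ from Fin.ext hp]

end FullyCommutative

lemma entry_of_lt {n : ℕ} (w : Equiv.Perm (Fin n)) {j : ℕ} (hj : j < n) :
    entry w j = w ⟨j, hj⟩ :=
  dif_pos hj

theorem pattern_3142_general {n : ℕ} (v w : Equiv.Perm (Fin n)) (i : ℕ) (h : i + 1 < n)
    (hw : FullyCommutative w)
    (hwv : w = v * simpleTr i h) (hl : invCount w = invCount v + 1)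
    (hsupp : i ∈ Supp v) (M m : ℕ)
    (hM : IsGreatest {x | ∃ j : Fin n, (j : ℕ) ≤ i ∧ (v j : ℕ) = x} M)
    (hm : IsLeast {x | ∃ j : Fin n, i + 1 ≤ (j : ℕ) ∧ (v j : ℕ) = x} m) :
    entry v i < m ∧ m < M ∧ M < entry v (i + 1) ∧
    (∃ p : Fin n, (p : ℕ) < i ∧ (v p : ℕ) = M) ∧
    (∃ q : Fin n, i + 1 < (q : ℕ) ∧ (v q : ℕ) = m) := by
  subst hwv
  have hasc := apply_lt_apply_of_invCount_mul_simpleTr h hl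
  obtain ⟨j, hji, hij⟩ := hsupp
  obtain ⟨q', hq', hvq'⟩ := exists_succ_le_apply_le_of_lt_apply v hji hij
  have hiM : i < M := hij.trans_le (hM.2 ⟨j, hji, rfl⟩)
  have hmi : m ≤ i := (hm.2 ⟨q', hq', rfl⟩).trans hvq'
  obtain ⟨p, hpi, rfl⟩ := hM.1
  obtain ⟨q, hqi, rfl⟩ := hm.1
  have hvq : v ⟨i, by omega⟩ < v q := hw.lt_apply_of_mul_simpleTr hasc hqi
  have hvp : v p < v ⟨i + 1, h⟩ := hw.apply_lt_of_mul_simpleTr hasc hpi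
  rw [Fin.lt_def] at hvq hvp
  have hp : (p : ℕ) ≠ i := fun e => by
    rw [show p = ⟨i, by omega⟩ from Fin.ext e] at hiM
    omega
  have hq : (q : ℕ) ≠ i + 1 := fun e => by
    rw [show q = ⟨i + 1, h⟩ from Fin.ext e] at hmi
    omega
  rw [entry_of_lt v (by omega), entry_of_lt v h]
  exact ⟨hvq, by omega, hvp, ⟨p, by omega, rfl⟩, ⟨q, by omega, rfl⟩⟩

/-- **Lemma.** If `i ∈ supp(v)`, with `M = max{v(j) : j ≤ i}` and
`m = min{v(j) : j ≥ i+1}`, then `M v(i) v(i+1) m` is a 3142-pattern in `v`: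
`v(i) < m < M < v(i+1)`, `M` occurs strictly before position `i`, and
`m` strictly after position `i+1`. -/
theorem pattern_3142 {n : ℕ} (v w : Equiv.Perm (Fin n)) (i : ℕ) (h : i + 1 < n)
    (hv : FullyCommutative v) (hw : FullyCommutative w)
    (hwv : w = v * simpleTr i h) (hl : invCount w = invCount v + 1)
    (hsupp : i ∈ Supp v) (M m : ℕ)
    (hM : IsGreatest {x | ∃ j : Fin n, (j : ℕ) ≤ i ∧ (v j : ℕ) = x} M)
    (hm : IsLeast {x | ∃ j : Fin n, i + 1 ≤ (j : ℕ) ∧ (v j : ℕ) = x} m) :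
    entry v i < m ∧ m < M ∧ M < entry v (i + 1) ∧
    (∃ p : Fin n, (p : ℕ) < i ∧ (v p : ℕ) = M) ∧
    (∃ q : Fin n, i + 1 < (q : ℕ) ∧ (v q : ℕ) = m) :=
  pattern_3142_general v w i h hw hwv hl hsupp M m hM hm
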